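/- Let T be an infinite rooted tree, ψ : T → ℂ, m ≠ n natural numbers. If M_ψ : L^(m) → L^(n) is bounded, then μ_{ψ,m,n} = sup_{v≠o} |ψ'(v)|·ℓ_m(|v|)·Λ_n(|v|) is finite; more precisely μ_{ψ,m,n} ≤ (‖M_ψ‖ + ν_{ψ,m,n})·‖g‖_m, where g(v) = ℓ_m(|v|) for v ≠ o, g(o) = 0, and ν_{ψ,m,n} = sup_{v≠o} |ψ(v⁻)|Λ_n(|v|)/Λ_m(|v|). -/

import Mathlib

/-!
Test the multiplier on `g = ℓ_m(|·|)`. It lies in `L^(m)`, because the mean value estimate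
`ℓ_j(x) - ℓ_j(y) ≤ (x - y) / Λ_j(y)` and `ℓ_j(y + 1) ≤ 2 ℓ_j(y)` give
`(ℓ_m(y + 1) - ℓ_m(y)) Λ_m(y + 1) ≤ 2^m`. By the product rule
`ψ'(v) g(v) = (ψ g)'(v) - ψ(v⁻) g'(v)`, hence
`|ψ'(v)| ℓ_m(|v|) Λ_n(|v|) ≤ ‖M_ψ g‖_n + (|ψ(v⁻)| Λ_n(|v|) / Λ_m(|v|)) (|g'(v)| Λ_m(|v|))
  ≤ (‖M_ψ‖ + ν_{ψ,m,n}) ‖g‖_m`.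
-/

open Real Filter

/-- Iterated logarithm: ℓ₀(x) = x, ℓ_{j+1}(x) = 1 + log ℓ_j(x). -/
noncomputable def ell : ℕ → ℝ → ℝ
  | 0, x => x
  | j + 1, x => 1 + Real.log (ell j x)

/-- Λ_k(x) = ∏_{j=0}^{k-1} ℓ_j(x). -/
noncomputable def Lam (k : ℕ) (x : ℝ) : ℝ := ∏ j ∈ Finset.range k, ell j x

/-- Discrete derivative of f on a rooted tree given by a parent map:
`f v - f (parent v)` (automatically 0 at the root since `parent o = o`). -/
def Der {V : Type*} (parent : V → V) (f : V → ℂ) (v : V) : ℂ := f v - f (parent v)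

/-- The set of values |f'(v)|·Λ_k(|v|) over v ≠ o; f ∈ L^(k) iff this set is bounded above. -/
def lipSet {V : Type*} (o : V) (parent : V → V) (depth : V → ℕ) (k : ℕ) (f : V → ℂ) : Set ℝ :=
  {r | ∃ v, v ≠ o ∧ r = ‖Der parent f v‖ * Lam k (depth v)}

/-- ‖f‖_k = |f(o)| + sup_{v ≠ o} |f'(v)|·Λ_k(|v|). -/
noncomputable def lipNorm {V : Type*} (o : V) (parent : V → V) (depth : V → ℕ) (k : ℕ)
    (f : V → ℂ) : ℝ :=
  ‖f o‖ + sSup (lipSet o parent depth k f)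

open Set

lemma one_le_ell : ∀ (j : ℕ) {x : ℝ}, 1 ≤ x → 1 ≤ ell j x
  | 0, _, hx => hx
  | j + 1, _, hx => by
    simp only [ell]
    linarith [Real.log_nonneg (one_le_ell j hx)]

lemma ell_monotoneOn : ∀ j : ℕ, MonotoneOn (ell j) (Ici 1)
  | 0 => monotoneOn_id
  | j + 1 => fun x hx y hy hxy => by
    simp only [ell]
    gcongr
    · linarith [one_le_ell j (mem_Ici.mp hx)]
    · exact ell_monotoneOn j hx hy hxy

lemma ell_one : ∀ j : ℕ, ell j 1 = 1
  | 0 => rfl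
  | j + 1 => by simp [ell, ell_one j]

lemma Lam_succ (k : ℕ) (x : ℝ) : Lam (k + 1) x = Lam k x * ell k x :=
  Finset.prod_range_succ _ _

lemma one_le_Lam (k : ℕ) {x : ℝ} (hx : 1 ≤ x) : 1 ≤ Lam k x :=
  Finset.one_le_prod fun j _ => one_le_ell j hx

lemma Lam_one (k : ℕ) : Lam k 1 = 1 := by
  simp [Lam, ell_one]

lemma ell_sub_ell_le : ∀ (j : ℕ) {x y : ℝ}, 1 ≤ y → y ≤ x →
    ell j x - ell j y ≤ (x - y) / Lam j y
  | 0, x, y, _, _ => by simp [ell, Lam]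
  | j + 1, x, y, hy, hxy => by
    have hy₀ : 0 < ell j y := by linarith [one_le_ell j hy]
    have hx₀ : 0 < ell j x := by linarith [one_le_ell j (hy.trans hxy)]
    calc ell (j + 1) x - ell (j + 1) y = Real.log (ell j x / ell j y) := by
          rw [Real.log_div hx₀.ne' hy₀.ne']; simp only [ell]; ring
      _ ≤ ell j x / ell j y - 1 := Real.log_le_sub_one_of_pos (div_pos hx₀ hy₀)
      _ = (ell j x - ell j y) / ell j y := by field_simp
      _ ≤ (x - y) / Lam j y / ell j y := by gcongr; exact ell_sub_ell_le j hy hxy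
      _ = (x - y) / Lam (j + 1) y := by rw [Lam_succ, div_div]

lemma ell_add_one_le_two_mul (j : ℕ) {y : ℝ} (hy : 1 ≤ y) : ell j (y + 1) ≤ 2 * ell j y := by
  have hstep := ell_sub_ell_le j hy (le_add_of_nonneg_right zero_le_one)
  rw [add_sub_cancel_left] at hstep
  have hΛ := one_le_Lam j hy
  have : 1 / Lam j y ≤ 1 := div_le_one_of_le₀ hΛ (zero_le_one.trans hΛ)
  linarith [one_le_ell j hy]

lemma Lam_add_one_le (k : ℕ) {y : ℝ} (hy : 1 ≤ y) : Lam k (y + 1) ≤ 2 ^ k * Lam k y := by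
  rw [Lam, Lam, show (2 : ℝ) ^ k = ∏ _j ∈ Finset.range k, 2 by simp, ← Finset.prod_mul_distrib]
  exact Finset.prod_le_prod (fun j _ => by linarith [one_le_ell j (by linarith : 1 ≤ y + 1)])
    fun j _ => ell_add_one_le_two_mul j hy

lemma abs_ell_add_one_sub_mul_Lam_le (m : ℕ) {y : ℝ} (hy : 1 ≤ y) :
    |ell m (y + 1) - ell m y| * Lam m (y + 1) ≤ 2 ^ m := by
  have hyy : y ≤ y + 1 := le_add_of_nonneg_right zero_le_one
  have hΛ : 1 ≤ Lam m y := one_le_Lam m hy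
  rw [abs_of_nonneg (sub_nonneg.mpr (ell_monotoneOn m hy (hy.trans hyy) hyy))]
  calc (ell m (y + 1) - ell m y) * Lam m (y + 1)
      ≤ (y + 1 - y) / Lam m y * (2 ^ m * Lam m y) :=
        mul_le_mul (ell_sub_ell_le m hy hyy) (Lam_add_one_le m hy)
          (by linarith [one_le_Lam m (hy.trans hyy)]) (by positivity)
    _ = 2 ^ m := by field_simp; ring

section Tree

variable {V : Type*} (o : V) (parent : V → V) (depth : V → ℕ)

lemma Der_mul (ψ g : V → ℂ) (v : V) :
    Der parent (fun x => ψ x * g x) v = Der parent ψ v * g v + ψ (parent v) * Der parent g v := by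
  simp only [Der]; ring

variable {o parent depth} in
lemma one_le_depth (hdepth : ∀ v, v ≠ o → depth v = depth (parent v) + 1) {v : V} (hv : v ≠ o) :
    (1 : ℝ) ≤ depth v := by
  rw [hdepth v hv, Nat.cast_add_one]
  linarith [(depth (parent v)).cast_nonneg (α := ℝ)]

variable {o parent depth} in
lemma norm_Der_mul_Lam_le_lipNorm {k : ℕ} {f : V → ℂ} (hf : BddAbove (lipSet o parent depth k f))
    {v : V} (hv : v ≠ o) : ‖Der parent f v‖ * Lam k (depth v) ≤ lipNorm o parent depth k f :=
  (le_csSup hf ⟨v, hv, rfl⟩).trans (le_add_of_nonneg_left (norm_nonneg _))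

lemma bddAbove_lipSet_ell [DecidableEq V] (hdepth0 : depth o = 0)
    (hdepth : ∀ v, v ≠ o → depth v = depth (parent v) + 1) (m : ℕ) :
    BddAbove (lipSet o parent depth m fun v => if v = o then 0 else (ell m (depth v) : ℂ)) := by
  refine ⟨2 ^ m, ?_⟩
  rintro r ⟨v, hv, rfl⟩
  by_cases hp : parent v = o
  · have hd : depth v = 1 := by rw [hdepth v hv, hp, hdepth0]
    simp [Der, hv, hp, hd, ell_one, Lam_one, one_le_pow₀]
  · have hd : (depth v : ℝ) = depth (parent v) + 1 := by rw [hdepth v hv]; push_cast; ring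
    simp only [Der, if_neg hv, if_neg hp, hd, ← Complex.ofReal_sub, Complex.norm_real,
      Real.norm_eq_abs]
    exact abs_ell_add_one_sub_mul_Lam_le m (one_le_depth hdepth hp)

variable {o parent depth} in
lemma norm_Der_mul_norm_mul_Lam_le {m n : ℕ} {ψ g : V → ℂ}
    (hg : BddAbove (lipSet o parent depth m g))
    (hψg : BddAbove (lipSet o parent depth n fun x => ψ x * g x))
    (hν : BddAbove {r : ℝ | ∃ v, v ≠ o ∧
      r = ‖ψ (parent v)‖ * Lam n (depth v) / Lam m (depth v)})
    {v : V} (hv : v ≠ o) (hd : (1 : ℝ) ≤ depth v) :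
    ‖Der parent ψ v‖ * ‖g v‖ * Lam n (depth v) ≤
      lipNorm o parent depth n (fun x => ψ x * g x) +
        sSup {r : ℝ | ∃ v, v ≠ o ∧
          r = ‖ψ (parent v)‖ * Lam n (depth v) / Lam m (depth v)} *
          lipNorm o parent depth m g := by
  have hΛm : 0 < Lam m (depth v) := zero_lt_one.trans_le (one_le_Lam m hd)
  have hΛn : 0 < Lam n (depth v) := zero_lt_one.trans_le (one_le_Lam n hd)
  have hνv := le_csSup hν ⟨v, hv, rfl⟩
  have hprod : Der parent ψ v * g v =
      Der parent (fun x => ψ x * g x) v - ψ (parent v) * Der parent g v := by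
    rw [Der_mul]; ring
  calc ‖Der parent ψ v‖ * ‖g v‖ * Lam n (depth v)
      ≤ (‖Der parent (fun x => ψ x * g x) v‖ + ‖ψ (parent v)‖ * ‖Der parent g v‖) *
          Lam n (depth v) := by
        rw [← norm_mul, hprod, ← norm_mul]; gcongr; exact norm_sub_le _ _
    _ = ‖Der parent (fun x => ψ x * g x) v‖ * Lam n (depth v) +
          ‖ψ (parent v)‖ * Lam n (depth v) / Lam m (depth v) *
            (‖Der parent g v‖ * Lam m (depth v)) := by field_simp
    _ ≤ _ := by
      gcongr
      · exact norm_Der_mul_Lam_le_lipNorm hψg hv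
      · exact (div_nonneg (by positivity) hΛm.le).trans hνv
      · exact norm_Der_mul_Lam_le_lipNorm hg hv

end Tree

theorem mu_finite_of_bounded_general {V : Type*} [DecidableEq V] (o : V) (parent : V → V)
    (depth : V → ℕ)
    (hdepth0 : depth o = 0)
    (hdepth : ∀ v, v ≠ o → depth v = depth (parent v) + 1)
    (ψ : V → ℂ) (m n : ℕ) (C : ℝ)
    (hbdd : ∀ f : V → ℂ, BddAbove (lipSet o parent depth m f) →
      BddAbove (lipSet o parent depth n (fun v => ψ v * f v)) ∧
      lipNorm o parent depth n (fun v => ψ v * f v) ≤ C * lipNorm o parent depth m f)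
    (hν : BddAbove {r : ℝ | ∃ v, v ≠ o ∧
      r = ‖ψ (parent v)‖ * Lam n (depth v) / Lam m (depth v)}) :
    BddAbove {r : ℝ | ∃ v, v ≠ o ∧
      r = ‖Der parent ψ v‖ * ell m (depth v) * Lam n (depth v)} ∧
    sSup {r : ℝ | ∃ v, v ≠ o ∧
      r = ‖Der parent ψ v‖ * ell m (depth v) * Lam n (depth v)} ≤
      (C + sSup {r : ℝ | ∃ v, v ≠ o ∧
          r = ‖ψ (parent v)‖ * Lam n (depth v) / Lam m (depth v)}) *
        lipNorm o parent depth m (fun v => if v = o then 0 else ell m (depth v)) := by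
  set g : V → ℂ := fun v => if v = o then 0 else (ell m (depth v) : ℂ)
  set ν := sSup {r : ℝ | ∃ v, v ≠ o ∧
    r = ‖ψ (parent v)‖ * Lam n (depth v) / Lam m (depth v)}
  have hg := bddAbove_lipSet_ell o parent depth hdepth0 hdepth m
  obtain ⟨hψg, hM⟩ := hbdd g hg
  have key : ∀ v, v ≠ o →
      ‖Der parent ψ v‖ * ell m (depth v) * Lam n (depth v) ≤
        (C + ν) * lipNorm o parent depth m g := by
    intro v hv
    have hgv : ‖g v‖ = ell m (depth v) := by
      simp [g, hv, abs_of_nonneg (zero_le_one.trans (one_le_ell m (one_le_depth hdepth hv)))]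
    rw [← hgv]
    linarith [norm_Der_mul_norm_mul_Lam_le hg hψg hν hv (one_le_depth hdepth hv)]
  have hbound : ∀ r ∈ {r : ℝ | ∃ v, v ≠ o ∧
      r = ‖Der parent ψ v‖ * ell m (depth v) * Lam n (depth v)},
      r ≤ (C + ν) * lipNorm o parent depth m g := fun r ⟨v, hv, hr⟩ => hr ▸ key v hv
  refine ⟨⟨_, hbound⟩, Real.sSup_le hbound ?_⟩
  -- `Real.sSup_le` also asks for `0 ≤ bound`; on the one-vertex tree both sides are `sSup ∅ = 0`.
  by_cases hV : ∃ v, v ≠ o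
  · obtain ⟨v, hv⟩ := hV
    have := one_le_ell m (one_le_depth hdepth hv)
    have := one_le_Lam n (one_le_depth hdepth hv)
    exact (by positivity : (0 : ℝ) ≤ ‖Der parent ψ v‖ * ell m (depth v) * Lam n (depth v)).trans
      (key v hv)
  · push Not at hV
    have hempty : lipSet o parent depth m g = ∅ :=
      eq_empty_of_forall_notMem fun _ ⟨v, hv, _⟩ => hv (hV v)
    simp [lipNorm, hempty, g]

/-- If M_ψ : L^(m) → L^(n) is bounded (with bound C) and ν_{ψ,m,n} is finite, then
μ_{ψ,m,n} is finite with μ_{ψ,m,n} ≤ (C + ν_{ψ,m,n})·‖g‖_m, where g = ℓ_m(|·|). -/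
theorem mu_finite_of_bounded {V : Type*} [DecidableEq V] (o : V) (parent : V → V)
    (depth : V → ℕ)
    (hpar : parent o = o) (hdepth0 : depth o = 0)
    (hdepth : ∀ v, v ≠ o → depth v = depth (parent v) + 1)
    (hchild : ∀ v, ∃ w, w ≠ o ∧ parent w = v)
    (ψ : V → ℂ) (m n : ℕ) (hmn : m ≠ n) (C : ℝ)
    (hbdd : ∀ f : V → ℂ, BddAbove (lipSet o parent depth m f) →
      BddAbove (lipSet o parent depth n (fun v => ψ v * f v)) ∧
      lipNorm o parent depth n (fun v => ψ v * f v) ≤ C * lipNorm o parent depth m f)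
    (hν : BddAbove {r : ℝ | ∃ v, v ≠ o ∧
      r = ‖ψ (parent v)‖ * Lam n (depth v) / Lam m (depth v)}) :
    BddAbove {r : ℝ | ∃ v, v ≠ o ∧
      r = ‖Der parent ψ v‖ * ell m (depth v) * Lam n (depth v)} ∧
    sSup {r : ℝ | ∃ v, v ≠ o ∧
      r = ‖Der parent ψ v‖ * ell m (depth v) * Lam n (depth v)} ≤
      (C + sSup {r : ℝ | ∃ v, v ≠ o ∧
          r = ‖ψ (parent v)‖ * Lam n (depth v) / Lam m (depth v)}) *
        lipNorm o parent depth m (fun v => if v = o then 0 else ell m (depth v)) :=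
  mu_finite_of_bounded_general o parent depth hdepth0 hdepth ψ m n C hbdd hν
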